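/- Let C, M ≥ 0. Let (W_n) be a sequence of measurable kernels [0,1]² → ℝ with |W_n(u,v)| ≤ C for all n, u, v, and let W : [0,1]² → ℝ be measurable with |W(u,v)| ≤ C. Let (X_n) be a sequence of measurable signals [0,1] → ℝ^f with ‖X_n(u)‖ ≤ M for all n, u, and let X : [0,1] → ℝ^f be measurable with ‖X(u)‖ ≤ M. Assume (i) sup over measurable sets S, T ⊆ [0,1] of |∫_{S×T} (W_n − W)| → 0 as n → ∞, and (ii) ∫₀¹ ‖X_n(u) − X(u)‖² du → 0 as n → ∞. Then Φ(W_n, X_n) → Φ(W, X) as n → ∞, where Φ(W,X) := ∫₀¹∫₀¹ W(u,v) ‖X(u) − X(v)‖² du dv. -/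

import Mathlib

open MeasureTheory Filter

/-- The graphon Dirichlet-energy functional
`Φ(W,X) = ∫₀¹∫₀¹ W(u,v) ‖X(u) − X(v)‖² du dv`. -/
noncomputable def graphonEnergy (f : ℕ) (W : ℝ → ℝ → ℝ)
    (X : ℝ → EuclideanSpace ℝ (Fin f)) : ℝ :=
  ∫ u in Set.Icc (0:ℝ) 1, ∫ v in Set.Icc (0:ℝ) 1, W u v * ‖X u - X v‖ ^ 2

/-!
Split `Φ(Wₙ, Xₙ) - Φ(W, X)` as `∫∫ Wₙ (‖Xₙ u - Xₙ v‖² - ‖X u - X v‖²) + ∫∫ (Wₙ - W) ‖X u - X v‖²`.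
Since `|‖a‖² - ‖b‖²| ≤ ‖a - b‖ (‖a‖ + ‖b‖)`, the first term is at most `8 C M ‖Xₙ - X‖₁`, and on a
probability space `‖·‖₁ ≤ ‖·‖₂`. For the second, expand
`‖x - y‖² = ‖x‖² + ‖y‖² - 2 ∑ᵢ ⟪eᵢ, x⟫ ⟪eᵢ, y⟫` in an orthonormal basis: every piece is a bilinear
form `∫∫ D(u,v) a(u) b(v)` with bounded `a`, `b`, and such a form is controlled by the cut norm of
`D = Wₙ - W`, because `∫ |h| ≤ 2 sup_S |∫_S h|` can be applied once in each variable.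
-/

open Topology Function
open scoped RealInnerProductSpace

section CutNorm

variable {α β : Type*} [MeasurableSpace α] [MeasurableSpace β] {μ : Measure α} {ν : Measure β}

theorem integral_abs_le_of_forall_abs_setIntegral_le {h : α → ℝ} (hh : Integrable h μ) {ε : ℝ}
    (H : ∀ S, MeasurableSet S → |∫ x in S, h x ∂μ| ≤ ε) : ∫ x, |h x| ∂μ ≤ 2 * ε := by
  have H₀ : ∀ S, NullMeasurableSet S μ → |∫ x in S, h x ∂μ| ≤ ε := fun S hS => by
    rw [← setIntegral_congr_set hS.toMeasurable_ae_eq]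
    exact H _ (measurableSet_toMeasurable μ S)
  have hpos := H₀ {x | 0 ≤ h x} (aestronglyMeasurable_const.nullMeasurableSet_le hh.1)
  have hneg := H₀ {x | h x ≤ 0} (hh.1.nullMeasurableSet_le aestronglyMeasurable_const)
  have := integral_norm_eq_pos_sub_neg hh
  simp only [Real.norm_eq_abs] at this
  rw [this]
  linarith [abs_le.mp hpos, abs_le.mp hneg]

theorem abs_integral_mul_le_of_forall_abs_setIntegral_le {h a : α → ℝ} (hh : Integrable h μ)
    {A ε : ℝ} (hA : 0 ≤ A) (haA : ∀ x, |a x| ≤ A)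
    (H : ∀ S, MeasurableSet S → |∫ x in S, h x ∂μ| ≤ ε) :
    |∫ x, h x * a x ∂μ| ≤ 2 * ε * A := by
  calc |∫ x, h x * a x ∂μ| ≤ ∫ x, |h x| * A ∂μ := by
        rw [← Real.norm_eq_abs]
        refine norm_integral_le_of_norm_le (hh.abs.mul_const A) (.of_forall fun x => ?_)
        rw [Real.norm_eq_abs, abs_mul]
        exact mul_le_mul_of_nonneg_left (haA x) (abs_nonneg _)
    _ = (∫ x, |h x| ∂μ) * A := integral_mul_const A _
    _ ≤ 2 * ε * A :=
        mul_le_mul_of_nonneg_right (integral_abs_le_of_forall_abs_setIntegral_le hh H) hA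

theorem MeasureTheory.Integrable.restrict_prod_restrict [SFinite μ] [SFinite ν] {f : α × β → ℝ}
    (hf : Integrable f (μ.prod ν)) (S : Set α) (T : Set β) :
    Integrable f ((μ.restrict S).prod (ν.restrict T)) := by
  rw [Measure.prod_restrict]; exact hf.restrict

theorem integrable_mul_mul_of_abs_le {D : α → β → ℝ} (hD : Integrable (uncurry D) (μ.prod ν))
    {a : α → ℝ} {b : β → ℝ} (ha : AEStronglyMeasurable a μ) (hb : AEStronglyMeasurable b ν)
    {A B : ℝ} (hA : 0 ≤ A) (haA : ∀ x, |a x| ≤ A) (hbB : ∀ y, |b y| ≤ B) :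
    Integrable (fun p : α × β => D p.1 p.2 * (a p.1 * b p.2)) (μ.prod ν) :=
  hD.mul_bdd (ha.comp_fst.mul hb.comp_snd) (c := A * B) (.of_forall fun p => by
    rw [norm_mul, Real.norm_eq_abs, Real.norm_eq_abs]
    exact mul_le_mul (haA p.1) (hbB p.2) (abs_nonneg _) hA)

theorem abs_integral_mul_mul_le_of_cut [SFinite μ] [SFinite ν] {D : α → β → ℝ}
    (hD : Integrable (uncurry D) (μ.prod ν)) {a : α → ℝ} {b : β → ℝ}
    (ha : AEStronglyMeasurable a μ) (hb : AEStronglyMeasurable b ν) {A B ε : ℝ}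
    (hA : 0 ≤ A) (hB : 0 ≤ B) (haA : ∀ x, |a x| ≤ A) (hbB : ∀ y, |b y| ≤ B)
    (hcut : ∀ S T, MeasurableSet S → MeasurableSet T → |∫ x in S, ∫ y in T, D x y ∂ν ∂μ| ≤ ε) :
    |∫ p, D p.1 p.2 * (a p.1 * b p.2) ∂μ.prod ν| ≤ 4 * ε * A * B := by
  have hDb : Integrable (uncurry fun x y => D x y * b y) (μ.prod ν) :=
    hD.mul_bdd hb.comp_snd (c := B) (.of_forall fun p => hbB p.2)
  have hrow : ∀ S, MeasurableSet S → |∫ x in S, ∫ y, D x y * b y ∂ν ∂μ| ≤ 2 * ε * B := by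
    intro S hS
    have hDS : Integrable (uncurry D) ((μ.restrict S).prod ν) := by
      simpa only [Measure.restrict_univ] using hD.restrict_prod_restrict S Set.univ
    rw [integral_integral_swap (by
      simpa only [Measure.restrict_univ] using hDb.restrict_prod_restrict S Set.univ)]
    simp only [integral_mul_const]
    refine abs_integral_mul_le_of_forall_abs_setIntegral_le hDS.integral_prod_right hB hbB
      fun T hT => ?_
    simp only [uncurry_apply_pair]
    rw [← integral_integral_swap (hD.restrict_prod_restrict S T)]
    exact hcut S T hS hT
  have hsplit : ∫ p, D p.1 p.2 * (a p.1 * b p.2) ∂μ.prod ν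
      = ∫ x, (∫ y, D x y * b y ∂ν) * a x ∂μ := by
    rw [integral_prod _ (integrable_mul_mul_of_abs_le hD ha hb hA haA hbB)]
    congr 1 with x
    rw [← integral_mul_const]
    congr 1 with y
    ring
  rw [hsplit]
  calc _ ≤ 2 * (2 * ε * B) * A := abs_integral_mul_le_of_forall_abs_setIntegral_le
        hDb.integral_prod_left hA haA hrow
    _ = 4 * ε * A * B := by ring

end CutNorm

section Energy

variable {α E : Type*} [MeasurableSpace α] {μ : Measure α}

theorem sq_integral_le_integral_sq [IsProbabilityMeasure μ] {f : α → ℝ} (hf : MemLp f 2 μ) :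
    (∫ x, f x ∂μ) ^ 2 ≤ ∫ x, f x ^ 2 ∂μ := by
  have := ProbabilityTheory.variance_nonneg f μ
  rw [ProbabilityTheory.variance_eq_sub hf] at this
  simpa only [Pi.pow_apply, sub_nonneg] using this

theorem tendsto_integral_norm_of_tendsto_integral_norm_sq [NormedAddCommGroup E]
    [IsProbabilityMeasure μ] {ι : Type*} {l : Filter ι} {F : ι → α → E}
    (hF : ∀ i, MemLp (F i) 2 μ) (h : Tendsto (fun i => ∫ x, ‖F i x‖ ^ 2 ∂μ) l (𝓝 0)) :
    Tendsto (fun i => ∫ x, ‖F i x‖ ∂μ) l (𝓝 0) := by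
  have hsqrt := h.sqrt
  rw [Real.sqrt_zero] at hsqrt
  exact squeeze_zero (fun i => integral_nonneg fun x => norm_nonneg _)
    (fun i => Real.le_sqrt_of_sq_le (sq_integral_le_integral_sq (hF i).norm)) hsqrt

theorem abs_norm_sq_sub_norm_sq_le [SeminormedAddCommGroup E] (a b : E) :
    |‖a‖ ^ 2 - ‖b‖ ^ 2| ≤ ‖a - b‖ * (‖a‖ + ‖b‖) := by
  rw [sq_sub_sq, abs_mul, abs_of_nonneg (by positivity), mul_comm]
  exact mul_le_mul_of_nonneg_right (abs_norm_sub_norm_le a b) (by positivity)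

variable [NormedAddCommGroup E]

noncomputable def dirichletEnergy (μ : Measure α) (W : α → α → ℝ) (X : α → E) : ℝ :=
  ∫ u, ∫ v, W u v * ‖X u - X v‖ ^ 2 ∂μ ∂μ

theorem integrable_mul_norm_sub_sq [IsFiniteMeasure μ] {W : α → α → ℝ} {X : α → E} {C M : ℝ}
    (hW : AEStronglyMeasurable (uncurry W) (μ.prod μ)) (hWC : ∀ u v, |W u v| ≤ C)
    (hX : AEStronglyMeasurable X μ) (hXM : ∀ u, ‖X u‖ ≤ M) :
    Integrable (fun p : α × α => W p.1 p.2 * ‖X p.1 - X p.2‖ ^ 2) (μ.prod μ) := by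
  refine Integrable.of_bound (hW.mul ((hX.comp_fst.sub hX.comp_snd).norm.pow 2)) (C * (2 * M) ^ 2)
    (.of_forall fun p => ?_)
  have hdist : ‖X p.1 - X p.2‖ ≤ 2 * M := by
    linarith [norm_sub_le (X p.1) (X p.2), hXM p.1, hXM p.2]
  rw [norm_mul, norm_pow, Real.norm_eq_abs, norm_norm]
  exact mul_le_mul (hWC p.1 p.2) (pow_le_pow_left₀ (norm_nonneg _) hdist 2) (by positivity)
    ((abs_nonneg _).trans (hWC p.1 p.2))

theorem dirichletEnergy_eq_integral_prod [IsFiniteMeasure μ] {W : α → α → ℝ} {X : α → E}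
    {C M : ℝ} (hW : AEStronglyMeasurable (uncurry W) (μ.prod μ)) (hWC : ∀ u v, |W u v| ≤ C)
    (hX : AEStronglyMeasurable X μ) (hXM : ∀ u, ‖X u‖ ≤ M) :
    dirichletEnergy μ W X = ∫ p, W p.1 p.2 * ‖X p.1 - X p.2‖ ^ 2 ∂μ.prod μ :=
  (integral_prod _ (integrable_mul_norm_sub_sq hW hWC hX hXM)).symm

theorem abs_integral_mul_norm_sub_sq_sub_le [IsProbabilityMeasure μ] {W : α → α → ℝ}
    {X Y : α → E} {C M : ℝ} (hWC : ∀ u v, |W u v| ≤ C) (hX : AEStronglyMeasurable X μ)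
    (hY : AEStronglyMeasurable Y μ) (hXM : ∀ u, ‖X u‖ ≤ M) (hYM : ∀ u, ‖Y u‖ ≤ M) :
    |∫ p, W p.1 p.2 * (‖X p.1 - X p.2‖ ^ 2 - ‖Y p.1 - Y p.2‖ ^ 2) ∂μ.prod μ|
      ≤ 8 * C * M * ∫ u, ‖X u - Y u‖ ∂μ := by
  set d : α → ℝ := fun u => ‖X u - Y u‖
  have hd : Integrable d μ := Integrable.of_bound (hX.sub hY).norm (2 * M) (.of_forall fun u => by
    rw [norm_norm]; linarith [norm_sub_le (X u) (Y u), hXM u, hYM u])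
  have hpt : ∀ p : α × α, ‖W p.1 p.2 * (‖X p.1 - X p.2‖ ^ 2 - ‖Y p.1 - Y p.2‖ ^ 2)‖
      ≤ 4 * C * M * (d p.1 + d p.2) := by
    rintro ⟨u, v⟩
    have hsub : ‖(X u - X v) - (Y u - Y v)‖ ≤ d u + d v := by
      rw [sub_sub_sub_comm]; exact norm_sub_le _ _
    have hsum : ‖X u - X v‖ + ‖Y u - Y v‖ ≤ 4 * M := by
      linarith [norm_sub_le (X u) (X v), norm_sub_le (Y u) (Y v), hXM u, hXM v, hYM u, hYM v]
    calc _ = |W u v| * |‖X u - X v‖ ^ 2 - ‖Y u - Y v‖ ^ 2| := by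
          rw [Real.norm_eq_abs, abs_mul]
      _ ≤ C * ((d u + d v) * (4 * M)) := by
          refine mul_le_mul (hWC u v) ((abs_norm_sq_sub_norm_sq_le _ _).trans ?_) (abs_nonneg _)
            ((abs_nonneg _).trans (hWC u v))
          exact mul_le_mul hsub hsum (by positivity) (by positivity)
      _ = 4 * C * M * (d u + d v) := by ring
  calc _ ≤ ∫ p, 4 * C * M * (d p.1 + d p.2) ∂μ.prod μ := by
        rw [← Real.norm_eq_abs]
        exact norm_integral_le_of_norm_le (((hd.comp_fst μ).add (hd.comp_snd μ)).const_mul _)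
          (.of_forall hpt)
    _ = 8 * C * M * ∫ u, d u ∂μ := by
        rw [integral_const_mul, integral_add (hd.comp_fst μ) (hd.comp_snd μ), integral_fun_fst,
          integral_fun_snd]
        simp only [probReal_univ, one_smul]
        ring

theorem abs_integral_mul_norm_sub_sq_le_of_cut [SFinite μ] [InnerProductSpace ℝ E]
    [FiniteDimensional ℝ E] {D : α → α → ℝ} (hD : Integrable (uncurry D) (μ.prod μ))
    {X : α → E} (hX : AEStronglyMeasurable X μ) {M ε : ℝ} (hXM : ∀ u, ‖X u‖ ≤ M)
    (hcut : ∀ S T, MeasurableSet S → MeasurableSet T → |∫ u in S, ∫ v in T, D u v ∂μ ∂μ| ≤ ε) :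
    |∫ p, D p.1 p.2 * ‖X p.1 - X p.2‖ ^ 2 ∂μ.prod μ|
      ≤ 8 * (Module.finrank ℝ E + 1) * ε * M ^ 2 := by
  set e := stdOrthonormalBasis ℝ E
  set c : Fin (Module.finrank ℝ E) → α → ℝ := fun i u => ⟪e i, X u⟫
  set q : α → ℝ := fun u => ‖X u‖ ^ 2
  have hq : AEStronglyMeasurable q μ := hX.norm.pow 2
  have hqM : ∀ u, |q u| ≤ M ^ 2 := fun u => by
    rw [abs_of_nonneg (by positivity)]; exact pow_le_pow_left₀ (norm_nonneg _) (hXM u) 2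
  have hc : ∀ i, AEStronglyMeasurable (c i) μ := fun i =>
    (continuous_const.inner continuous_id).comp_aestronglyMeasurable hX
  -- `|M|` rather than `M`: the bilinear bound needs nonnegative constants, and `α` may be empty.
  have hcM : ∀ i u, |c i u| ≤ |M| := fun i u => by
    refine (abs_real_inner_le_norm _ _).trans ?_
    rw [e.norm_eq_one, one_mul]
    exact (hXM u).trans (le_abs_self M)
  have h1 : ∀ u, |(fun _ : α => (1 : ℝ)) u| ≤ 1 := fun _ => by norm_num
  have hexpand : ∀ p : α × α, D p.1 p.2 * ‖X p.1 - X p.2‖ ^ 2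
      = D p.1 p.2 * (q p.1 * 1) + D p.1 p.2 * (1 * q p.2)
        - 2 * ∑ i, D p.1 p.2 * (c i p.1 * c i p.2) := by
    intro p
    rw [norm_sub_sq_real, ← e.sum_inner_mul_inner, ← Finset.mul_sum]
    simp only [q, c, real_inner_comm (e _) (X p.1)]
    ring
  have hint₁ :=
    integrable_mul_mul_of_abs_le hD hq aestronglyMeasurable_const (sq_nonneg M) hqM h1
  have hint₂ :=
    integrable_mul_mul_of_abs_le hD aestronglyMeasurable_const hq zero_le_one h1 hqM
  have hintc := fun i =>
    integrable_mul_mul_of_abs_le hD (hc i) (hc i) (abs_nonneg M) (hcM i) (hcM i)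
  have hb₁ := abs_integral_mul_mul_le_of_cut hD hq aestronglyMeasurable_const (sq_nonneg M)
    zero_le_one hqM h1 hcut
  have hb₂ := abs_integral_mul_mul_le_of_cut hD aestronglyMeasurable_const hq zero_le_one
    (sq_nonneg M) h1 hqM hcut
  have hbc : ∀ i, |∫ p, D p.1 p.2 * (c i p.1 * c i p.2) ∂μ.prod μ| ≤ 4 * ε * M ^ 2 := fun i => by
    simpa only [mul_assoc, abs_mul_abs_self, sq] using abs_integral_mul_mul_le_of_cut hD (hc i)
      (hc i) (abs_nonneg M) (abs_nonneg M) (hcM i) (hcM i) hcut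
  have hbsum : |∑ i, ∫ p, D p.1 p.2 * (c i p.1 * c i p.2) ∂μ.prod μ|
      ≤ Module.finrank ℝ E * (4 * ε * M ^ 2) :=
    calc _ ≤ ∑ i, |∫ p, D p.1 p.2 * (c i p.1 * c i p.2) ∂μ.prod μ| :=
          Finset.abs_sum_le_sum_abs _ _
      _ ≤ ∑ _i : Fin (Module.finrank ℝ E), 4 * ε * M ^ 2 := Finset.sum_le_sum fun i _ => hbc i
      _ = _ := by simp
  have hint₁₂ : Integrable (fun p : α × α => D p.1 p.2 * (q p.1 * 1) + D p.1 p.2 * (1 * q p.2))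
      (μ.prod μ) := hint₁.add hint₂
  have hintSum : Integrable (fun p : α × α => 2 * ∑ i, D p.1 p.2 * (c i p.1 * c i p.2))
      (μ.prod μ) := (integrable_finsetSum _ fun i _ => hintc i).const_mul 2
  rw [integral_congr_ae (.of_forall hexpand), integral_sub hint₁₂ hintSum, integral_add hint₁ hint₂,
    integral_const_mul, integral_finsetSum _ fun i _ => hintc i]
  rw [abs_le] at hb₁ hb₂ hbsum ⊢
  constructor <;> linarith

theorem abs_dirichletEnergy_sub_le [IsProbabilityMeasure μ] [InnerProductSpace ℝ E]
    [FiniteDimensional ℝ E] {W' W : α → α → ℝ} {X' X : α → E} {C M ε : ℝ}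
    (hW' : AEStronglyMeasurable (uncurry W') (μ.prod μ))
    (hW : AEStronglyMeasurable (uncurry W) (μ.prod μ))
    (hW'C : ∀ u v, |W' u v| ≤ C) (hWC : ∀ u v, |W u v| ≤ C)
    (hX' : AEStronglyMeasurable X' μ) (hX : AEStronglyMeasurable X μ)
    (hX'M : ∀ u, ‖X' u‖ ≤ M) (hXM : ∀ u, ‖X u‖ ≤ M)
    (hcut : ∀ S T, MeasurableSet S → MeasurableSet T →
      |∫ u in S, ∫ v in T, (W' u v - W u v) ∂μ ∂μ| ≤ ε) :
    |dirichletEnergy μ W' X' - dirichletEnergy μ W X|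
      ≤ 8 * C * M * ∫ u, ‖X' u - X u‖ ∂μ + 8 * (Module.finrank ℝ E + 1) * ε * M ^ 2 := by
  have hD : Integrable (uncurry fun u v => W' u v - W u v) (μ.prod μ) :=
    (Integrable.of_bound hW' C (.of_forall fun p => hW'C p.1 p.2)).sub
      (Integrable.of_bound hW C (.of_forall fun p => hWC p.1 p.2))
  have hsplit : dirichletEnergy μ W' X' - dirichletEnergy μ W X
      = ∫ p, W' p.1 p.2 * (‖X' p.1 - X' p.2‖ ^ 2 - ‖X p.1 - X p.2‖ ^ 2) ∂μ.prod μ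
        + ∫ p, (W' p.1 p.2 - W p.1 p.2) * ‖X p.1 - X p.2‖ ^ 2 ∂μ.prod μ := by
    have h₁ := integrable_mul_norm_sub_sq hW' hW'C hX' hX'M
    have h₂ := integrable_mul_norm_sub_sq hW' hW'C hX hXM
    have h₃ := integrable_mul_norm_sub_sq hW hWC hX hXM
    simp only [mul_sub, sub_mul]
    rw [dirichletEnergy_eq_integral_prod hW' hW'C hX' hX'M,
      dirichletEnergy_eq_integral_prod hW hWC hX hXM, integral_sub h₁ h₂, integral_sub h₂ h₃]
    ring
  rw [hsplit]
  exact (abs_add_le _ _).trans (add_le_add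
    (abs_integral_mul_norm_sub_sq_sub_le hW'C hX' hX hX'M hXM)
    (abs_integral_mul_norm_sub_sq_le_of_cut hD hX hXM hcut))

theorem tendsto_dirichletEnergy [IsProbabilityMeasure μ] [InnerProductSpace ℝ E]
    [FiniteDimensional ℝ E] {ι : Type*} {l : Filter ι} {W' : ι → α → α → ℝ} {W : α → α → ℝ}
    {X' : ι → α → E} {X : α → E} {C M : ℝ}
    (hW' : ∀ i, AEStronglyMeasurable (uncurry (W' i)) (μ.prod μ))
    (hW : AEStronglyMeasurable (uncurry W) (μ.prod μ))
    (hW'C : ∀ i u v, |W' i u v| ≤ C) (hWC : ∀ u v, |W u v| ≤ C)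
    (hX' : ∀ i, AEStronglyMeasurable (X' i) μ) (hX : AEStronglyMeasurable X μ)
    (hX'M : ∀ i u, ‖X' i u‖ ≤ M) (hXM : ∀ u, ‖X u‖ ≤ M)
    (hcut : ∀ ε > 0, ∀ᶠ i in l, ∀ S T, MeasurableSet S → MeasurableSet T →
      |∫ u in S, ∫ v in T, (W' i u v - W u v) ∂μ ∂μ| ≤ ε)
    (hL1 : Tendsto (fun i => ∫ u, ‖X' i u - X u‖ ∂μ) l (𝓝 0)) :
    Tendsto (fun i => dirichletEnergy μ (W' i) (X' i)) l (𝓝 (dirichletEnergy μ W X)) := by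
  rw [Metric.tendsto_nhds]
  intro ε hε
  set K : ℝ := 8 * (Module.finrank ℝ E + 1) * M ^ 2
  have hsignal : ∀ᶠ i in l, 8 * C * M * ∫ u, ‖X' i u - X u‖ ∂μ < ε / 2 := by
    have h := hL1.const_mul (8 * C * M)
    rw [mul_zero] at h
    exact h.eventually (gt_mem_nhds (half_pos hε))
  have hkernel : K * (ε / (2 * (K + 1))) ≤ ε / 2 := by
    rw [mul_div_assoc', div_le_div_iff₀ (by positivity) two_pos]
    nlinarith
  filter_upwards [hsignal, hcut (ε / (2 * (K + 1))) (by positivity)] with i hi hcuti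
  rw [Real.dist_eq]
  calc _ ≤ 8 * C * M * ∫ u, ‖X' i u - X u‖ ∂μ + K * (ε / (2 * (K + 1))) := by
        have := abs_dirichletEnergy_sub_le (hW' i) hW (hW'C i) hWC (hX' i) hX (hX'M i) hXM hcuti
        linarith
    _ < ε / 2 + ε / 2 := add_lt_add_of_lt_of_le hi hkernel
    _ = ε := add_halves ε

end Energy

/-- Continuity of the Dirichlet-energy graphon functional under joint
graphon–signal convergence: if the kernels `Wseq n` converge to `W` in cut norm and
the signals `Xseq n` converge to `X` in L², all uniformly bounded, then
`Φ(Wseq n, Xseq n) → Φ(W, X)`. -/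
theorem graphonEnergy_continuous_graphon_signal_convergence
    (f : ℕ) (C M : ℝ)
    (Wseq : ℕ → ℝ → ℝ → ℝ) (W : ℝ → ℝ → ℝ)
    (hWseqmeas : ∀ n, Measurable fun p : ℝ × ℝ => Wseq n p.1 p.2)
    (hWmeas : Measurable fun p : ℝ × ℝ => W p.1 p.2)
    (hWseqbd : ∀ n u v, |Wseq n u v| ≤ C)
    (hWbd : ∀ u v, |W u v| ≤ C)
    (Xseq : ℕ → ℝ → EuclideanSpace ℝ (Fin f)) (X : ℝ → EuclideanSpace ℝ (Fin f))
    (hXseqmeas : ∀ n, Measurable (Xseq n)) (hXmeas : Measurable X)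
    (hXseqbd : ∀ n u, ‖Xseq n u‖ ≤ M)
    (hXbd : ∀ u, ‖X u‖ ≤ M)
    (hcut : ∀ ε > (0:ℝ), ∃ N : ℕ, ∀ n ≥ N,
      ∀ S T : Set ℝ, MeasurableSet S → MeasurableSet T →
        S ⊆ Set.Icc (0:ℝ) 1 → T ⊆ Set.Icc (0:ℝ) 1 →
        |∫ u in S, ∫ v in T, (Wseq n u v - W u v)| ≤ ε)
    (hL2 : Tendsto (fun n => ∫ u in Set.Icc (0:ℝ) 1, ‖Xseq n u - X u‖ ^ 2)
      atTop (nhds 0)) :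
    Tendsto (fun n => graphonEnergy f (Wseq n) (Xseq n)) atTop
      (nhds (graphonEnergy f W X)) := by
  have : IsProbabilityMeasure (volume.restrict (Set.Icc (0:ℝ) 1)) := ⟨by simp⟩
  -- `graphonEnergy f` unfolds to `dirichletEnergy` for Lebesgue measure on `[0, 1]`.
  refine tendsto_dirichletEnergy (fun n => (hWseqmeas n).aestronglyMeasurable)
    hWmeas.aestronglyMeasurable hWseqbd hWbd (fun n => (hXseqmeas n).aestronglyMeasurable)
    hXmeas.aestronglyMeasurable hXseqbd hXbd (fun ε hε => ?_) ?_
  · obtain ⟨N, hN⟩ := hcut ε hε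
    filter_upwards [eventually_ge_atTop N] with n hn S T hS hT
    rw [Measure.restrict_restrict hS, Measure.restrict_restrict hT]
    exact hN n hn _ _ (hS.inter measurableSet_Icc) (hT.inter measurableSet_Icc)
      Set.inter_subset_right Set.inter_subset_right
  · refine tendsto_integral_norm_of_tendsto_integral_norm_sq (fun n => ?_) hL2
    refine MemLp.of_bound ((hXseqmeas n).sub hXmeas).aestronglyMeasurable (M + M)
      (.of_forall fun u => ?_)
    exact (norm_sub_le _ _).trans (add_le_add (hXseqbd n u) (hXbd u))
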